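/- Let D be a rooted DAG with root r, sink set W, and λ(v) = (⌊log₂ π(r,v)⌋, ⌊log₂ π(v,W)⌋) for each node v, and let E_scd(D) be the set of edges (u,i,v) with λ(u) = λ(v). Then every node of D has at most one outgoing edge in E_scd(D) and at most one incoming edge in E_scd(D); furthermore, every directed path from the root r to a sink node contains at most 2·log₂ n(D) edges that do not belong to E_scd(D). -/

import Mathlib

/-!
Counting paths by their first edge gives `π(u,W) ≥ ∑ π(v,W)` over the out-edges `(u,i,v)`,
and by their last edge `π(r,v) ≥ ∑ π(r,u)` over the in-edges `(u,i,v)`. Two nonzero terms of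
a sum bounded by `s` cannot both lie in the dyadic block `[2ᵏ, 2ᵏ⁺¹)` containing `s`, so at
most one out-edge keeps `⌊log₂ π(·,W)⌋` and at most one in-edge keeps `⌊log₂ π(r,·)⌋`.
Along every edge `⌊log₂ π(r,·)⌋` weakly increases and `⌊log₂ π(·,W)⌋` weakly decreases, and
an edge outside `E_scd` moves one of them; on a root-to-sink path they travel from `0` up to
at most `log₂ n` and from `log₂ n` down to `0`, which bounds the number of such edges by
`2 log₂ n`.
-/

/-- `Reaches out u v`: there is a directed path from `u` to `v` in the DAG
with ordered out-edge lists `out`. -/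
inductive Reaches {V : ℕ} (out : Fin V → List (Fin V)) : Fin V → Fin V → Prop
  | refl (u : Fin V) : Reaches out u u
  | step {u v w : Fin V} : v ∈ out u → Reaches out v w → Reaches out u w

/-- A rooted DAG: nodes `Fin V`, each node with an ordered list of out-edges
(parallel edges allowed, respecting a topological order, which makes the edge
relation acyclic), and a root `r` with no incoming edges from which every node
is reachable. -/
structure RootedDAG : Type where
  V : ℕ
  out : Fin V → List (Fin V)
  desc : ∀ u : Fin V, ∀ v ∈ out u, v < u
  root : Fin V
  rootNoIn : ∀ u : Fin V, root ∉ out u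
  reach : ∀ v : Fin V, Reaches out root v

namespace RootedDAG

/-- `π(u,v)`: the number of directed paths from `u` to `v` (with `π(u,u)=1`). -/
def pathCount (D : RootedDAG) (u v : Fin D.V) : ℕ :=
  if u = v then 1
  else ((D.out u).attach.map (fun x => D.pathCount x.1 v)).sum
termination_by (u : ℕ)
decreasing_by exact D.desc u x.1 x.2

/-- The set `W` of sink nodes of `D`. -/
def sinks (D : RootedDAG) : Finset (Fin D.V) :=
  Finset.univ.filter (fun w => D.out w = [])

/-- `π(u,W)`: the number of directed paths from `u` to some sink. -/
def pathToSinks (D : RootedDAG) (u : Fin D.V) : ℕ :=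
  ∑ w ∈ D.sinks, D.pathCount u w

/-- `n(D) = π(r,W)`. -/
def nD (D : RootedDAG) : ℕ := D.pathToSinks D.root

/-- `λ(v) = (⌊log₂ π(r,v)⌋, ⌊log₂ π(v,W)⌋)`. -/
def lam (D : RootedDAG) (v : Fin D.V) : ℕ × ℕ :=
  (Nat.log 2 (D.pathCount D.root v), Nat.log 2 (D.pathToSinks v))

/-- The `i`-th out-edge of `u` is in `E_scd(D)`, i.e. `λ(u) = λ(v)` for its
target `v`. -/
def ScdEdge (D : RootedDAG) (u : Fin D.V) (i : ℕ) : Prop :=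
  ∃ h : i < (D.out u).length, D.lam u = D.lam ((D.out u).get ⟨i, h⟩)

/-- `IsPath D u ps w`: `ps` is the list of (source node, out-edge index) pairs
of consecutive edges of a directed path from `u` to `w`. -/
inductive IsPath (D : RootedDAG) : Fin D.V → List (Fin D.V × ℕ) → Fin D.V → Prop
  | nil (u : Fin D.V) : IsPath D u [] u
  | cons {u : Fin D.V} {i : ℕ} {ps : List (Fin D.V × ℕ)} {w : Fin D.V}
      (h : i < (D.out u).length) :
      IsPath D ((D.out u).get ⟨i, h⟩) ps w → IsPath D u ((u, i) :: ps) w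

open Classical in
/-- The number of edges of the path `ps` that do not belong to `E_scd(D)`. -/
noncomputable def nonScdCount (D : RootedDAG) (ps : List (Fin D.V × ℕ)) : ℕ :=
  (ps.map (fun p => if D.ScdEdge p.1 p.2 then 0 else 1)).sum

end RootedDAG

theorem Nat.lt_add_of_log_two_eq {x y s : ℕ} (hx : x ≠ 0) (hy : y ≠ 0)
    (hxs : Nat.log 2 x = Nat.log 2 s) (hys : Nat.log 2 y = Nat.log 2 s) : s < x + y := by
  have hx' := Nat.pow_log_le_self 2 hx
  have hy' := Nat.pow_log_le_self 2 hy
  have hs := Nat.lt_pow_succ_log_self one_lt_two s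
  rw [hxs] at hx'
  rw [hys] at hy'
  rw [Nat.pow_succ] at hs
  omega

theorem Fintype.eq_of_log_two_eq_of_sum_le {ι : Type*} [Fintype ι] [DecidableEq ι]
    {f : ι → ℕ} {s : ℕ} (hsum : ∑ k, f k ≤ s) {i j : ι} (hi : f i ≠ 0) (hj : f j ≠ 0)
    (his : Nat.log 2 (f i) = Nat.log 2 s) (hjs : Nat.log 2 (f j) = Nat.log 2 s) : i = j := by
  by_contra hij
  have hpair : f i + f j ≤ ∑ k, f k := by
    rw [← Finset.sum_pair hij]
    exact Finset.sum_le_univ_sum_of_nonneg fun _ => Nat.zero_le _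
  have := Nat.lt_add_of_log_two_eq hi hj his hjs
  omega

namespace RootedDAG

variable (D : RootedDAG)

theorem pathCount_self (u : Fin D.V) : D.pathCount u u = 1 := by
  rw [pathCount, if_pos rfl]

theorem pathCount_of_ne {u v : Fin D.V} (h : u ≠ v) :
    D.pathCount u v = ∑ i : Fin (D.out u).length, D.pathCount ((D.out u).get i) v := by
  rw [pathCount, if_neg h]
  simpa using (Fin.sum_univ_fun_getElem (D.out u) (D.pathCount · v)).symm

theorem pathCount_eq_zero_of_lt {u v : Fin D.V} (h : u < v) : D.pathCount u v = 0 := by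
  induction u using WellFoundedLT.induction with
  | _ u ih =>
    rw [D.pathCount_of_ne h.ne]
    refine Finset.sum_eq_zero fun i _ => ?_
    have hi := D.desc u _ (List.get_mem _ i)
    exact ih _ hi (hi.trans h)

theorem pathCount_eq_ite_add_sum_out (u v : Fin D.V) :
    D.pathCount u v =
      (if u = v then 1 else 0) + ∑ i : Fin (D.out u).length, D.pathCount ((D.out u).get i) v := by
  by_cases h : u = v
  · subst h
    rw [pathCount_self, if_pos rfl, left_eq_add]
    exact Finset.sum_eq_zero fun i _ => D.pathCount_eq_zero_of_lt (D.desc u _ (List.get_mem _ i))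
  · rw [if_neg h, zero_add, D.pathCount_of_ne h]

abbrev Edge : Type := (u : Fin D.V) × Fin (D.out u).length

abbrev Edge.target {D : RootedDAG} (e : D.Edge) : Fin D.V := (D.out e.1).get e.2

def adjMatrix : Matrix (Fin D.V) (Fin D.V) ℤ :=
  fun u v => ∑ i : Fin (D.out u).length, if (D.out u).get i = v then 1 else 0

def pathMatrix : Matrix (Fin D.V) (Fin D.V) ℤ :=
  fun u v => D.pathCount u v

theorem pathMatrix_eq_one_add_adjMatrix_mul : D.pathMatrix = 1 + D.adjMatrix * D.pathMatrix := by
  ext u v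
  simp only [pathMatrix, adjMatrix, Matrix.add_apply, Matrix.one_apply, Matrix.mul_apply,
    Finset.sum_mul, ite_mul, one_mul, zero_mul]
  rw [Finset.sum_comm]
  simp [D.pathCount_eq_ite_add_sum_out u v]

/-- The backward recurrence follows from the forward one because a one-sided inverse of a
square matrix is two-sided. -/
theorem pathMatrix_eq_one_add_mul_adjMatrix : D.pathMatrix = 1 + D.pathMatrix * D.adjMatrix := by
  have hleft : (1 - D.adjMatrix) * D.pathMatrix = 1 := by
    rw [sub_mul, one_mul, sub_eq_iff_eq_add', add_comm, ← pathMatrix_eq_one_add_adjMatrix_mul]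
  have hright := mul_eq_one_comm.1 hleft
  rw [mul_sub, mul_one, sub_eq_iff_eq_add', add_comm] at hright
  exact hright

theorem pathCount_eq_ite_add_sum_in (x v : Fin D.V) :
    D.pathCount x v = (if x = v then 1 else 0) +
      ∑ e : D.Edge, if e.target = v then D.pathCount x e.1 else 0 := by
  have h := congrFun (congrFun D.pathMatrix_eq_one_add_mul_adjMatrix x) v
  simp only [pathMatrix, adjMatrix, Matrix.add_apply, Matrix.one_apply, Matrix.mul_apply,
    Finset.mul_sum, mul_ite, mul_one, mul_zero] at h
  rw [Fintype.sum_sigma]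
  exact_mod_cast h

theorem sum_pathCount_get_le (u v : Fin D.V) :
    ∑ i : Fin (D.out u).length, D.pathCount ((D.out u).get i) v ≤ D.pathCount u v := by
  rw [D.pathCount_eq_ite_add_sum_out u v]
  exact Nat.le_add_left _ _

theorem sum_pathCount_in_le (x v : Fin D.V) :
    ∑ e : D.Edge, (if e.target = v then D.pathCount x e.1 else 0) ≤ D.pathCount x v := by
  rw [D.pathCount_eq_ite_add_sum_in x v]
  exact Nat.le_add_left _ _

theorem pathCount_get_le (u v : Fin D.V) (i : Fin (D.out u).length) :
    D.pathCount ((D.out u).get i) v ≤ D.pathCount u v :=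
  (Finset.single_le_sum (fun _ _ => Nat.zero_le _) (Finset.mem_univ i)).trans
    (D.sum_pathCount_get_le u v)

theorem pathCount_le_pathCount_get (x u : Fin D.V) (i : Fin (D.out u).length) :
    D.pathCount x u ≤ D.pathCount x ((D.out u).get i) := by
  refine le_trans ?_ (D.sum_pathCount_in_le x _)
  convert Finset.single_le_sum (fun _ _ => Nat.zero_le _) (Finset.mem_univ (⟨u, i⟩ : D.Edge))
  rw [if_pos rfl]

theorem one_le_pathCount_of_reaches {u v : Fin D.V} (h : Reaches D.out u v) :
    1 ≤ D.pathCount u v := by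
  induction h with
  | refl u => rw [pathCount_self]
  | step hv _ ih =>
    obtain ⟨i, rfl⟩ := List.mem_iff_get.1 hv
    exact ih.trans (D.pathCount_get_le _ _ i)

theorem pathCount_root_ne_zero (v : Fin D.V) : D.pathCount D.root v ≠ 0 :=
  Nat.one_le_iff_ne_zero.1 (D.one_le_pathCount_of_reaches (D.reach v))

theorem pathToSinks_eq (u : Fin D.V) :
    D.pathToSinks u = (if D.out u = [] then 1 else 0) +
      ∑ i : Fin (D.out u).length, D.pathToSinks ((D.out u).get i) := by
  simp only [pathToSinks]
  rw [Finset.sum_congr rfl fun w _ => D.pathCount_eq_ite_add_sum_out u w, Finset.sum_add_distrib,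
    Finset.sum_ite_eq, Finset.sum_comm]
  simp [sinks]

theorem sum_pathToSinks_get_le (u : Fin D.V) :
    ∑ i : Fin (D.out u).length, D.pathToSinks ((D.out u).get i) ≤ D.pathToSinks u := by
  rw [D.pathToSinks_eq u]
  exact Nat.le_add_left _ _

theorem pathToSinks_of_out_eq_nil {w : Fin D.V} (hw : D.out w = []) : D.pathToSinks w = 1 := by
  rw [pathToSinks_eq, if_pos hw, add_eq_left]
  exact Finset.sum_eq_zero fun i _ => absurd i.2 (by simp [hw])

theorem pathToSinks_get_le (u : Fin D.V) (i : Fin (D.out u).length) :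
    D.pathToSinks ((D.out u).get i) ≤ D.pathToSinks u :=
  (Finset.single_le_sum (fun _ _ => Nat.zero_le _) (Finset.mem_univ i)).trans
    (D.sum_pathToSinks_get_le u)

theorem pathToSinks_ne_zero (u : Fin D.V) : D.pathToSinks u ≠ 0 := by
  induction u using WellFoundedLT.induction with
  | _ u ih =>
    by_cases hu : D.out u = []
    · exact D.pathToSinks_of_out_eq_nil hu ▸ one_ne_zero
    · let i : Fin (D.out u).length := ⟨0, List.length_pos_iff.2 hu⟩
      exact fun h0 => ih _ (D.desc u _ (List.get_mem _ i))
        (Nat.eq_zero_of_le_zero (h0 ▸ D.pathToSinks_get_le u i))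

theorem scdEdge_iff {u : Fin D.V} (i : Fin (D.out u).length) :
    D.ScdEdge u i ↔ D.lam u = D.lam ((D.out u).get i) :=
  ⟨fun ⟨_, h⟩ => h, fun h => ⟨i.2, h⟩⟩

theorem index_eq_of_scdEdge {u : Fin D.V} {i j : Fin (D.out u).length}
    (hi : D.ScdEdge u i) (hj : D.ScdEdge u j) : i = j := by
  rw [scdEdge_iff] at hi hj
  exact Fintype.eq_of_log_two_eq_of_sum_le (D.sum_pathToSinks_get_le u)
    (D.pathToSinks_ne_zero _) (D.pathToSinks_ne_zero _)
    (congrArg Prod.snd hi).symm (congrArg Prod.snd hj).symm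

theorem edge_eq_of_scdEdge {e e' : D.Edge} (he : D.ScdEdge e.1 e.2) (he' : D.ScdEdge e'.1 e'.2)
    (htarget : e.target = e'.target) : e = e' := by
  rw [scdEdge_iff] at he he'
  refine Fintype.eq_of_log_two_eq_of_sum_le (D.sum_pathCount_in_le D.root e'.target)
    (i := e) (j := e') ?_ ?_ ?_ ?_ <;>
    simp only [htarget, if_true]
  · exact D.pathCount_root_ne_zero _
  · exact D.pathCount_root_ne_zero _
  · exact htarget ▸ congrArg Prod.fst he
  · exact congrArg Prod.fst he'

theorem nonScdCount_cons (p : Fin D.V × ℕ) (ps : List (Fin D.V × ℕ)) :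
    D.nonScdCount (p :: ps) = D.nonScdCount [p] + D.nonScdCount ps := by
  simp [nonScdCount]

theorem nonScdCount_singleton_add_le (u : Fin D.V) (i : Fin (D.out u).length) :
    D.nonScdCount [(u, i)] + Nat.log 2 (D.pathCount D.root u) +
        Nat.log 2 (D.pathToSinks ((D.out u).get i)) ≤
      Nat.log 2 (D.pathCount D.root ((D.out u).get i)) + Nat.log 2 (D.pathToSinks u) := by
  have hroot := Nat.log_mono_right (b := 2) (D.pathCount_le_pathCount_get D.root u i)
  have hsinks := Nat.log_mono_right (b := 2) (D.pathToSinks_get_le u i)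
  simp only [nonScdCount, List.map_cons, List.map_nil, List.sum_cons, List.sum_nil, add_zero]
  split_ifs with hs <;> simp only [scdEdge_iff, lam, Prod.ext_iff] at hs <;> omega

theorem IsPath.nonScdCount_add_le {u w : Fin D.V} {ps : List (Fin D.V × ℕ)}
    (hp : D.IsPath u ps w) :
    D.nonScdCount ps + Nat.log 2 (D.pathCount D.root u) + Nat.log 2 (D.pathToSinks w) ≤
      Nat.log 2 (D.pathCount D.root w) + Nat.log 2 (D.pathToSinks u) := by
  induction hp with
  | nil u => simp [nonScdCount]
  | cons h _ ih =>
    have hedge := D.nonScdCount_singleton_add_le _ ⟨_, h⟩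
    dsimp only at hedge
    rw [nonScdCount_cons]
    omega

theorem nonScdCount_le_two_mul_log {ps : List (Fin D.V × ℕ)} {w : Fin D.V}
    (hp : D.IsPath D.root ps w) (hw : D.out w = []) : D.nonScdCount ps ≤ 2 * Nat.log 2 D.nD := by
  have hbound := hp.nonScdCount_add_le
  simp only [pathCount_self, D.pathToSinks_of_out_eq_nil hw, Nat.log_one_right, add_zero]
    at hbound
  have hle : D.pathCount D.root w ≤ D.nD :=
    Finset.single_le_sum (f := D.pathCount D.root) (fun _ _ => Nat.zero_le _)
      (Finset.mem_filter.2 ⟨Finset.mem_univ w, hw⟩)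
  have := Nat.log_mono_right (b := 2) hle
  unfold nD at this ⊢
  omega

end RootedDAG

/-- Ganardi et al., symmetric centroid decomposition.
In any rooted DAG `D`, every node has at most one outgoing and at most one
incoming edge in `E_scd(D)`, and every directed path from the root to a sink
contains at most `2·log₂ n(D)` edges not in `E_scd(D)`. -/
theorem scd_decomposition (D : RootedDAG) :
    (∀ (u : Fin D.V) (i j : ℕ), D.ScdEdge u i → D.ScdEdge u j → i = j) ∧
    (∀ (v u u' : Fin D.V) (i i' : ℕ)
      (h : i < (D.out u).length) (h' : i' < (D.out u').length),
      (D.out u).get ⟨i, h⟩ = v → (D.out u').get ⟨i', h'⟩ = v →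
      D.ScdEdge u i → D.ScdEdge u' i' → u = u' ∧ i = i') ∧
    (∀ (ps : List (Fin D.V × ℕ)) (w : Fin D.V),
      D.IsPath D.root ps w → D.out w = [] →
      (D.nonScdCount ps : ℝ) ≤ 2 * Real.logb 2 (D.nD)) := by
  refine ⟨fun u i j hi hj => ?_, fun v u u' i i' h h' hv hv' hs hs' => ?_,
    fun ps w hp hw => ?_⟩
  · exact congrArg Fin.val
      (D.index_eq_of_scdEdge (i := ⟨i, hi.fst⟩) (j := ⟨j, hj.fst⟩) hi hj)
  · obtain ⟨rfl, hi⟩ := Sigma.mk.inj_iff.1 <|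
      D.edge_eq_of_scdEdge (e := ⟨u, ⟨i, h⟩⟩) (e' := ⟨u', ⟨i', h'⟩⟩) hs hs' (hv.trans hv'.symm)
    exact ⟨rfl, congrArg Fin.val (eq_of_heq hi)⟩
  · calc (D.nonScdCount ps : ℝ) ≤ (2 * Nat.log 2 D.nD : ℕ) := by
          exact_mod_cast D.nonScdCount_le_two_mul_log hp hw
      _ ≤ 2 * Real.logb 2 D.nD := by
          push_cast
          gcongr
          exact_mod_cast Real.natLog_le_logb D.nD 2
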